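/- The OUT criterion is sound: if for v ∈ F we have d[v] ≤ min( min_{u∈F,w∈F,(u,w)∈E} (d[u]+c(u,w)), min_{u∈F,w∈U,w'∈F∪U,(u,w),(w,w')∈E} (d[u]+c(u,w)+c(w,w')) ), then d[v] = dist(s,v). -/

import Mathlib

open scoped ENNReal Classical
open Set

variable {V : Type*}

/-- Cost of a path (list of vertices): sum of edge costs of consecutive pairs. -/
noncomputable def pathCost (c : V → V → NNReal) (l : List V) : ℝ≥0∞ :=
  ((l.zip l.tail).map fun p => (c p.1 p.2 : ℝ≥0∞)).sum

/-- `l` is a path from `s` to `v` following edges of `E`. -/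
def IsPath (E : V → V → Prop) (s v : V) (l : List V) : Prop :=
  l.head? = some s ∧ l.getLast? = some v ∧ l.Chain' E

/-- A path from `s` to `v` all of whose intermediate vertices lie in `S`. -/
def IsSPath (E : V → V → Prop) (S : Set V) (s v : V) (l : List V) : Prop :=
  IsPath E s v l ∧ ∀ x ∈ l.dropLast.tail, x ∈ S

/-- Shortest-path distance from `s` to `v` (`∞` if unreachable). -/
noncomputable def gdist (E : V → V → Prop) (c : V → V → NNReal) (s v : V) : ℝ≥0∞ :=
  ⨅ l ∈ {l | IsPath E s v l}, pathCost c l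

/-- Shortest distance from `s` to `v` over paths with intermediates in `S`. -/
noncomputable def sdist (E : V → V → Prop) (c : V → V → NNReal) (S : Set V) (s v : V) : ℝ≥0∞ :=
  ⨅ l ∈ {l | IsSPath E S s v l}, pathCost c l

/-- The invariants of Dijkstra's algorithm for the partition `(S, F, U)` of the
vertex set with tentative distances `d`. -/
structure DijkstraInv (E : V → V → Prop) (c : V → V → NNReal) (s : V)
    (S F U : Set V) (d : V → ℝ≥0∞) : Prop where
  cover : S ∪ F ∪ U = univ
  disjSF : Disjoint S F
  disjSU : Disjoint S U
  disjFU : Disjoint F U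
  settled : ∀ u ∈ S, d u = gdist E c s u
  settledPath : ∀ u ∈ S, ∃ l, IsSPath E S s u l ∧ pathCost c l = d u
  fringe : ∀ u ∈ F, d u = sdist E c S s u ∧ ∃ l, IsSPath E S s u l
  unexplored : ∀ u ∈ U, ¬ ∃ l, IsSPath E S s u l

section Aux

lemma pathCost_nil (c : V → V → NNReal) : pathCost c ([] : List V) = 0 := by simp [pathCost]

lemma pathCost_single (c : V → V → NNReal) (x : V) : pathCost c [x] = 0 := by simp [pathCost]

lemma pathCost_cons_cons (c : V → V → NNReal) (a b : V) (l : List V) :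
    pathCost c (a :: b :: l) = (c a b : ℝ≥0∞) + pathCost c (b :: l) := by
  simp [pathCost]

lemma pathCost_append (c : V → V → NNReal) (A : List V) (x : V) (Q : List V) :
    pathCost c (A ++ x :: Q) = pathCost c (A ++ [x]) + pathCost c (x :: Q) := by
  induction A with
  | nil => simp [pathCost_single]
  | cons a A ih =>
    cases A with
    | nil => simp [pathCost_cons_cons, pathCost_single]
    | cons b A' =>
      simp only [List.cons_append] at *
      rw [pathCost_cons_cons, pathCost_cons_cons, ih, add_assoc]

lemma sdist_le' {E : V → V → Prop} {c : V → V → NNReal} {S : Set V} {s v : V} {l : List V}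
    (h : IsSPath E S s v l) : sdist E c S s v ≤ pathCost c l := iInf₂_le l h

lemma gdist_le' {E : V → V → Prop} {c : V → V → NNReal} {s v : V} {l : List V}
    (h : IsPath E s v l) : gdist E c s v ≤ pathCost c l := iInf₂_le l h

lemma mem_dropLast_tail_cons {a : V} {l : List V} {x : V}
    (hx : x ∈ (a :: l).dropLast.tail) : x ∈ l := by
  cases l with
  | nil => simp at hx
  | cons b m =>
    have h : (a :: b :: m).dropLast = a :: (b :: m).dropLast := by simp
    rw [h] at hx
    exact List.dropLast_subset _ hx

/-- Key step: a path whose tail consists of a block of vertices in `S` followed by a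
block of vertices outside `S` has cost at least `d v`. -/
lemma OUT_block (E : V → V → Prop) (c : V → V → NNReal) (s : V)
    (S F U : Set V) (d : V → ℝ≥0∞) (hinv : DijkstraInv E c s S F U d)
    (v : V) (hv : v ∈ F)
    (hOUT : d v ≤
      min (⨅ p ∈ {p : V × V | p.1 ∈ F ∧ p.2 ∈ F ∧ E p.1 p.2},
            (d p.1 + (c p.1 p.2 : ℝ≥0∞)))
        (⨅ t ∈ {t : V × V × V | t.1 ∈ F ∧ t.2.1 ∈ U ∧ t.2.2 ∈ F ∪ U ∧
              E t.1 t.2.1 ∧ E t.2.1 t.2.2},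
            (d t.1 + (c t.1 t.2.1 : ℝ≥0∞) + (c t.2.1 t.2.2 : ℝ≥0∞))))
    (Bl Cl : List V) (hB : ∀ x ∈ Bl, x ∈ S) (hC : ∀ x ∈ Cl, x ∉ S)
    (hpath : IsPath E s v (s :: (Bl ++ Cl))) :
    d v ≤ pathCost c (s :: (Bl ++ Cl)) := by
  obtain ⟨hhead, hlast, hchain⟩ := hpath
  cases Cl with
  | nil =>
    have hsp : IsSPath E S s v (s :: (Bl ++ [])) := by
      refine ⟨⟨hhead, hlast, hchain⟩, fun x hx => ?_⟩
      simp only [List.append_nil] at hx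
      exact hB x (mem_dropLast_tail_cons hx)
    calc d v = sdist E c S s v := (hinv.fringe v hv).1
      _ ≤ _ := sdist_le' hsp
  | cons u C2 =>
    have hPS : IsSPath E S s u ((s :: Bl) ++ [u]) := by
      refine ⟨⟨by simp, List.getLast?_concat, ?_⟩, fun x hx => ?_⟩
      · have h : s :: (Bl ++ u :: C2) = ((s :: Bl) ++ [u]) ++ C2 := by simp
        rw [h] at hchain
        exact (List.isChain_append.mp hchain).1
      · rw [List.dropLast_concat] at hx
        exact hB x hx
    have huS : u ∉ S := hC u (by simp)
    have huU : u ∉ U := fun h => hinv.unexplored u h ⟨_, hPS⟩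
    have huF : u ∈ F := by
      have hu : u ∈ S ∪ F ∪ U := by rw [hinv.cover]; exact mem_univ u
      rcases hu with (h | h) | h
      · exact absurd h huS
      · exact h
      · exact absurd h huU
    have hdu : d u ≤ pathCost c ((s :: Bl) ++ [u]) := by
      rw [(hinv.fringe u huF).1]; exact sdist_le' hPS
    cases C2 with
    | nil =>
      have hvu : v = u := by
        have h : (s :: (Bl ++ [u])).getLast? = some u := by
          rw [show s :: (Bl ++ [u]) = (s :: Bl) ++ [u] by simp]
          exact List.getLast?_concat
        rw [hlast] at h
        exact Option.some.inj h
      subst hvu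
      calc d v ≤ pathCost c ((s :: Bl) ++ [v]) := hdu
        _ = _ := by simp
    | cons w C3 =>
      have hch : List.Chain' E (((s :: Bl) ++ [u]) ++ (w :: C3)) := by
        rw [show ((s :: Bl) ++ [u]) ++ (w :: C3) = s :: (Bl ++ u :: w :: C3) by simp]
        exact hchain
      have hEuw : E u w := by
        have := (List.isChain_append.mp hch).2.2
        exact this u (List.getLast?_concat) w rfl
      have hchWC : List.Chain' E (w :: C3) := (List.isChain_append.mp hch).2.1
      have hwS : w ∉ S := hC w (by simp)
      have hw : w ∈ S ∪ F ∪ U := by rw [hinv.cover]; exact mem_univ w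
      rcases hw with (hw | hwF) | hwU
      · exact absurd hw hwS
      · -- w ∈ F : use the first term of the OUT criterion
        have hcost : pathCost c (s :: (Bl ++ u :: w :: C3)) =
            pathCost c ((s :: Bl) ++ [u]) + ((c u w : ℝ≥0∞) + pathCost c (w :: C3)) := by
          rw [show s :: (Bl ++ u :: w :: C3) = (s :: Bl) ++ u :: (w :: C3) by simp,
            pathCost_append, pathCost_cons_cons]
        have h1 : d v ≤ d u + (c u w : ℝ≥0∞) := by
          refine le_trans (le_trans hOUT (min_le_left _ _)) ?_
          exact iInf₂_le ((u, w) : V × V) ⟨huF, hwF, hEuw⟩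
        calc d v ≤ d u + (c u w : ℝ≥0∞) := h1
          _ ≤ pathCost c ((s :: Bl) ++ [u]) + ((c u w : ℝ≥0∞) + pathCost c (w :: C3)) := by
              refine add_le_add hdu ?_
              exact le_self_add
          _ = _ := hcost.symm
      · -- w ∈ U : use the second term of the OUT criterion
        cases C3 with
        | nil =>
          exfalso
          have h : (s :: (Bl ++ [u, w])).getLast? = some w := by
            rw [show s :: (Bl ++ [u, w]) = ((s :: Bl) ++ [u]) ++ [w] by simp]
            exact List.getLast?_concat
          rw [hlast] at h
          exact hinv.disjFU.le_bot ⟨(Option.some.inj h) ▸ hv, hwU⟩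
        | cons w' C4 =>
          have hw'S : w' ∉ S := hC w' (by simp)
          have hw' : w' ∈ S ∪ F ∪ U := by rw [hinv.cover]; exact mem_univ w'
          have hw'FU : w' ∈ F ∪ U := by
            rcases hw' with (h | h) | h
            · exact absurd h hw'S
            · exact Or.inl h
            · exact Or.inr h
          have hEww' : E w w' := (List.isChain_cons_cons.mp hchWC).1
          have h1 : d v ≤ d u + (c u w : ℝ≥0∞) + (c w w' : ℝ≥0∞) := by
            refine le_trans (le_trans hOUT (min_le_right _ _)) ?_
            exact iInf₂_le ((u, w, w') : V × V × V) ⟨huF, hwU, hw'FU, hEuw, hEww'⟩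
          have hcost : pathCost c (s :: (Bl ++ u :: w :: w' :: C4)) =
              pathCost c ((s :: Bl) ++ [u]) + (c u w : ℝ≥0∞) + (c w w' : ℝ≥0∞)
                + pathCost c (w' :: C4) := by
            rw [show s :: (Bl ++ u :: w :: w' :: C4) = (s :: Bl) ++ u :: (w :: w' :: C4) by simp,
              pathCost_append, pathCost_cons_cons, pathCost_cons_cons]
            ring
          calc d v ≤ d u + (c u w : ℝ≥0∞) + (c w w' : ℝ≥0∞) := h1
            _ ≤ pathCost c ((s :: Bl) ++ [u]) + (c u w : ℝ≥0∞) + (c w w' : ℝ≥0∞) := by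
                exact add_le_add (add_le_add hdu le_rfl) le_rfl
            _ ≤ pathCost c ((s :: Bl) ++ [u]) + (c u w : ℝ≥0∞) + (c w w' : ℝ≥0∞)
                + pathCost c (w' :: C4) := le_self_add
            _ = _ := hcost.symm

end Aux

/-- Soundness of the OUT criterion. -/
theorem OUT_sound (E : V → V → Prop) (c : V → V → NNReal) (s : V)
    (S F U : Set V) (d : V → ℝ≥0∞) (hinv : DijkstraInv E c s S F U d)
    (v : V) (hv : v ∈ F)
    (hOUT : d v ≤
      min (⨅ p ∈ {p : V × V | p.1 ∈ F ∧ p.2 ∈ F ∧ E p.1 p.2},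
            (d p.1 + (c p.1 p.2 : ℝ≥0∞)))
        (⨅ t ∈ {t : V × V × V | t.1 ∈ F ∧ t.2.1 ∈ U ∧ t.2.2 ∈ F ∪ U ∧
              E t.1 t.2.1 ∧ E t.2.1 t.2.2},
            (d t.1 + (c t.1 t.2.1 : ℝ≥0∞) + (c t.2.1 t.2.2 : ℝ≥0∞)))) :
    d v = gdist E c s v := by
  refine le_antisymm ?_ ?_
  · -- d v ≤ gdist : every path costs at least d v
    refine le_iInf₂ fun l hl => ?_
    obtain ⟨hhead, hlast, hchain⟩ := hl
    cases l with
    | nil => simp at hhead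
    | cons a t =>
    rw [show a = s by simpa using hhead] at hlast hchain ⊢
    classical
    rcases h : t.reverse.dropWhile (fun x => decide (x ∉ S)) with _ | ⟨w, D2⟩
    · -- no vertex of the tail lies in S
      have hall : ∀ x ∈ t, x ∉ S := by
        intro x hx
        have := List.dropWhile_eq_nil_iff.mp h x (List.mem_reverse.mpr hx)
        simpa using this
      have := OUT_block E c s S F U d hinv v hv hOUT [] t (by simp) hall
        (show IsPath E s v (s :: ([] ++ t)) from ⟨rfl, by simpa using hlast, by simpa using hchain⟩)
      simpa using this
    · -- w is the last vertex of the tail lying in S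
      have hwS : w ∈ S := by
        have h2 := List.head?_dropWhile_not (fun x => decide (x ∉ S)) t.reverse
        rw [h] at h2
        have h3 : decide (w ∉ S) = false := h2
        simpa using h3
      set C : List V := (t.reverse.takeWhile (fun x => decide (x ∉ S))).reverse with hCdef
      have hC : ∀ x ∈ C, x ∉ S := by
        intro x hx
        have := List.mem_takeWhile_imp (List.mem_reverse.mp hx)
        simpa using this
      have ht : t = D2.reverse ++ w :: C := by
        have h0 := List.takeWhile_append_dropWhile (p := fun x => decide (x ∉ S)) (l := t.reverse)
        rw [h] at h0
        conv_lhs => rw [← List.reverse_reverse t, ← h0]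
        rw [hCdef]
        simp
      -- the two splittings of the original path
      have hl1 : s :: t = (s :: D2.reverse) ++ (w :: C) := by rw [ht]; simp
      have hch1 : List.Chain' E ((s :: D2.reverse) ++ (w :: C)) := by rw [← hl1]; exact hchain
      have hchWC : List.Chain' E (w :: C) := (List.isChain_append.mp hch1).2.1
      have hlastWC : (w :: C).getLast? = some v := by
        rw [hl1, List.getLast?_append_of_ne_nil _ (by simp)] at hlast
        exact hlast
      have hchP0 : List.Chain' E ((s :: D2.reverse) ++ [w]) := by
        have hl2 : s :: t = ((s :: D2.reverse) ++ [w]) ++ C := by rw [ht]; simp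
        rw [hl2] at hchain
        exact (List.isChain_append.mp hchain).1
      have hP0 : IsPath E s w ((s :: D2.reverse) ++ [w]) :=
        ⟨by simp, List.getLast?_concat, hchP0⟩
      -- the settled path to w
      obtain ⟨lw, hlw, hlwcost⟩ := hinv.settledPath w hwS
      have hlwne : lw ≠ [] := by
        intro hnil
        have := hlw.1.1
        rw [hnil] at this
        simp at this
      have hlwlast : lw.getLast hlwne = w := by
        have := List.getLast?_eq_getLast (l := lw) hlwne
        rw [hlw.1.2.1] at this
        exact (Option.some.inj this).symm
      have hlw_eq : lw.dropLast ++ [w] = lw := by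
        have h1 := List.dropLast_append_getLast hlwne
        rwa [hlwlast] at h1
      -- cost comparison
      have hcost_l : pathCost c (s :: t) =
          pathCost c ((s :: D2.reverse) ++ [w]) + pathCost c (w :: C) := by
        rw [hl1, pathCost_append]
      have hcost_l' : pathCost c (lw.dropLast ++ w :: C) =
          pathCost c lw + pathCost c (w :: C) := by
        rw [pathCost_append, hlw_eq]
      have hle : pathCost c (lw.dropLast ++ w :: C) ≤ pathCost c (s :: t) := by
        rw [hcost_l, hcost_l']
        refine add_le_add ?_ le_rfl
        rw [hlwcost, hinv.settled w hwS]
        exact gdist_le' hP0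
      -- chain property of the modified path
      have hchlw : List.Chain' E (lw.dropLast ++ [w]) := by rw [hlw_eq]; exact hlw.1.2.2
      have hchl' : List.Chain' E (lw.dropLast ++ w :: C) := by
        rcases List.isChain_append.mp hchlw with ⟨h1, _, h3⟩
        refine List.isChain_append.mpr ⟨h1, hchWC, ?_⟩
        intro x hx y hy
        simp only [List.head?_cons, Option.mem_def, Option.some.injEq] at hy
        subst hy
        exact h3 x hx w rfl
      refine le_trans ?_ hle
      -- apply the key lemma to the modified path
      rcases hdl : lw.dropLast with _ | ⟨a2, A2⟩
      · -- lw = [w], so w = s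
        have hws : w = s := by
          have h9 := hlw.1.1
          rw [← hlw_eq, hdl] at h9
          simpa using h9
        have hkey := OUT_block E c s S F U d hinv v hv hOUT [] C (by simp) hC
          (⟨by simp, by simpa [hws] using hlastWC, by simpa [hws] using hchWC⟩)
        simpa [hws] using hkey
      · -- lw.dropLast = s :: A2 with A2 ⊆ S
        have ha2 : a2 = s := by
          have h9 := hlw.1.1
          rw [← hlw_eq, hdl] at h9
          simpa using h9
        have hB : ∀ x ∈ A2 ++ [w], x ∈ S := by
          intro x hx
          rcases List.mem_append.mp hx with hx | hx
          · refine hlw.2 x ?_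
            rw [← hlw_eq, List.dropLast_concat, hdl]
            simpa using hx
          · simp only [List.mem_singleton] at hx
            exact hx ▸ hwS
        have hform : s :: ((A2 ++ [w]) ++ C) = lw.dropLast ++ w :: C := by
          rw [hdl, ha2]; simp
        have hkey := OUT_block E c s S F U d hinv v hv hOUT (A2 ++ [w]) C hB hC ?_
        · calc d v ≤ pathCost c (s :: ((A2 ++ [w]) ++ C)) := hkey
            _ = pathCost c (a2 :: A2 ++ w :: C) := by rw [ha2]; simp
        refine ⟨by simp, ?_, ?_⟩
        · rw [show s :: ((A2 ++ [w]) ++ C) = (s :: A2) ++ (w :: C) by simp,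
            List.getLast?_append_of_ne_nil _ (by simp)]
          exact hlastWC
        · rw [hform]
          exact hchl'
  · -- gdist ≤ d v since every S-path is a path
    rw [(hinv.fringe v hv).1]
    exact le_iInf₂ fun l hl => iInf₂_le l hl.1
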